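/- arXiv:2011.12140 — 5 statements merged into one kernel-verified Lean document; each statement's English description precedes it below -/
import Mathlib

section
/- For every complex number z, 1/Γ(z) = z · e^{γ z} · ∏_{n=1}^∞ (1 + z/n) e^{-z/n}, where the infinite product converges. -/
/-!
Euler's limit formula `Γ(z) = lim n^z n! / (z (z+1) ⋯ (z+n))` is, after taking inverses, the
limit of the finite identity `1 / Γₙ(z) = z e^{(Hₙ - log n) z} ∏_{k<n} (1 + z/(k+1)) e^{-z/(k+1)}`,
and `Hₙ - log n → γ`. The product converges because `(1 + w) e^{-w} = 1 + O(w²)`.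
-/

open Filter Topology Finset Complex
open scoped Nat

lemma norm_one_add_mul_exp_neg_sub_one_le {w : ℂ} (hw : ‖w‖ ≤ 1) :
    ‖(1 + w) * exp (-w) - 1‖ ≤ 3 * ‖w‖ ^ 2 := by
  have hr : ‖exp (-w) - 1 - -w‖ ≤ ‖w‖ ^ 2 := by
    simpa using norm_exp_sub_one_sub_id_le (x := -w) (by simpa using hw)
  calc ‖(1 + w) * exp (-w) - 1‖ = ‖(1 + w) * (exp (-w) - 1 - -w) - w ^ 2‖ := by ring_nf
    _ ≤ (1 + ‖w‖) * ‖w‖ ^ 2 + ‖w‖ ^ 2 := by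
      refine (norm_sub_le _ _).trans ?_
      rw [norm_mul, norm_pow]
      gcongr
      exact (norm_add_le _ _).trans (by simp)
    _ ≤ 3 * ‖w‖ ^ 2 := by nlinarith [norm_nonneg w]

lemma multipliable_one_add_div_mul_exp_neg_div (z : ℂ) :
    Multipliable fun n : ℕ => (1 + z / (n + 1)) * exp (-z / (n + 1)) := by
  have hbound : ∀ᶠ n : ℕ in atTop,
      ‖(1 + z / (n + 1)) * exp (-z / (n + 1)) - 1‖ ≤
        3 * ‖z‖ ^ 2 * (1 / ((n + 1 : ℕ) : ℝ) ^ 2) := by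
    filter_upwards [(tendsto_natCast_atTop_atTop (R := ℝ)).eventually_ge_atTop ‖z‖] with n hn
    have hn1 : (0 : ℝ) < n + 1 := by positivity
    have hw : ‖z / (n + 1)‖ = ‖z‖ / (n + 1) := by
      rw [norm_div]; norm_cast
    have := norm_one_add_mul_exp_neg_sub_one_le (w := z / (n + 1))
      (by rw [hw, div_le_one hn1]; linarith)
    rw [hw] at this
    rw [neg_div]
    convert this using 1
    push_cast
    rw [div_pow]
    ring
  have hsum : Summable fun n : ℕ => 3 * ‖z‖ ^ 2 * (1 / ((n + 1 : ℕ) : ℝ) ^ 2) :=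
    ((summable_nat_add_iff 1).mpr (Real.summable_one_div_nat_pow.mpr one_lt_two)).mul_left _
  simpa using Complex.multipliable_one_add_of_summable
    (Summable.of_norm_bounded_eventually_nat hsum hbound)

lemma prod_one_add_div_natCast_succ (z : ℂ) (n : ℕ) :
    ∏ k ∈ range n, (1 + z / (k + 1)) = (∏ k ∈ range n, (z + (k + 1))) / n ! := by
  rw [← prod_range_add_one_eq_factorial, Nat.cast_prod, ← prod_div_distrib]
  refine prod_congr rfl fun k _ => ?_
  have : (k : ℂ) + 1 ≠ 0 := Nat.cast_add_one_ne_zero k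
  push_cast
  field_simp
  ring

lemma sum_div_natCast_succ (z : ℂ) (n : ℕ) :
    ∑ k ∈ range n, z / (k + 1) = (harmonic n : ℝ) * z := by
  simp only [harmonic]
  push_cast
  rw [sum_mul]
  exact sum_congr rfl fun k _ => by ring

lemma inv_GammaSeq_eq (z : ℂ) {n : ℕ} (hn : n ≠ 0) :
    (GammaSeq z n)⁻¹ = z * exp (((harmonic n : ℝ) - Real.log n : ℝ) * z) *
      ∏ k ∈ range n, (1 + z / (k + 1)) * exp (-z / (k + 1)) := by
  have hpow : (n : ℂ) ^ z = exp ((Real.log n : ℂ) * z) := by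
    rw [cpow_def_of_ne_zero (by exact_mod_cast hn), ← ofReal_natCast,
      ← ofReal_log n.cast_nonneg, mul_comm]
  rw [prod_mul_distrib, ← exp_sum, prod_one_add_div_natCast_succ]
  simp_rw [neg_div]
  rw [sum_neg_distrib, sum_div_natCast_succ, GammaSeq, inv_div, prod_range_succ', hpow]
  push_cast
  rw [sub_mul, exp_sub, exp_neg]
  have : (n ! : ℂ) ≠ 0 := Nat.cast_ne_zero.mpr n.factorial_ne_zero
  field_simp
  ring

lemma tendsto_inv_GammaSeq (z : ℂ) :
    Tendsto (fun n => (GammaSeq z n)⁻¹) atTop (𝓝 (Gamma z)⁻¹) := by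
  by_cases hz : ∃ m : ℕ, z = -m
  · obtain ⟨m, rfl⟩ := hz
    -- at a pole both `Γ` and, eventually, `GammaSeq` take the junk value `0`
    rw [Gamma_neg_nat_eq_zero, inv_zero]
    refine tendsto_const_nhds.congr' ?_
    filter_upwards [eventually_ge_atTop m] with n hn
    have : ∏ j ∈ range (n + 1), (-(m : ℂ) + j) = 0 :=
      prod_eq_zero (mem_range.2 (Nat.lt_succ_of_le hn)) (neg_add_cancel _)
    simp [GammaSeq, this]
  · push Not at hz
    exact (GammaSeq_tendsto_Gamma z).inv₀ (Gamma_ne_zero hz)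

theorem weierstrass_product_Gamma (z : ℂ) :
    ∃ p : ℂ, HasProd (fun n : ℕ => (1 + z / (n + 1)) * Complex.exp (-z / (n + 1))) p ∧
      (Complex.Gamma z)⁻¹ =
        z * Complex.exp ((Real.eulerMascheroniConstant : ℂ) * z) * p := by
  obtain ⟨p, hp⟩ := multipliable_one_add_div_mul_exp_neg_div z
  refine ⟨p, hp, tendsto_nhds_unique (tendsto_inv_GammaSeq z) ?_⟩
  have hexp : Tendsto (fun n : ℕ => z * exp (((harmonic n : ℝ) - Real.log n : ℝ) * z)) atTop
      (𝓝 (z * exp (Real.eulerMascheroniConstant * z))) :=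
    (((continuous_ofReal.tendsto _).comp Real.tendsto_harmonic_sub_log).mul_const z).cexp
      |>.const_mul z
  refine (hexp.mul hp.tendsto_prod_nat).congr' ?_
  filter_upwards [eventually_ne_atTop 0] with n hn
  exact (inv_GammaSeq_eq z hn).symm
end

section
/- (Wielandt) Let f be holomorphic on the right half-plane {z : Re z > 0}, bounded on the strip {z : 1 ≤ Re z ≤ 2}, satisfying f(z+1) = z f(z) for all z with Re z > 0 and f(1) = 1. Then f(z) = Γ(z) for all z with Re z > 0. -/
/-!
Put `Δ = f - Γ`: it is holomorphic on `Re z > 0`, satisfies `Δ (z + 1) = z Δ z`, vanishes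
at `1` and is bounded on the strip `1 ≤ Re z ≤ 2`. Read as `Δ z = Δ (z + 1) / z`, the
functional equation continues `Δ` to an entire function `D`; the singularities at
`0, -1, -2, …` are removable because `Δ 1 = 0`. The entire function `V z = D z * D (1 - z)`
satisfies `V (z + 1) = -V z`, and it is bounded on the strip: `D z` by hypothesis,
`D (1 - z) = D (3 - z) / ((1 - z) (2 - z))` for `|Im z| ≥ 1`, and `V` by compactness elsewhere.
So `V` is bounded on `ℂ`, hence constant by Liouville, equal to `V 1 = 0`. Analytic functions
on `ℂ` have no zero divisors, so `D = 0`.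
-/

open Complex Set Filter Topology MeasureTheory

namespace Complex

theorem norm_Gamma_le_Gamma_re {z : ℂ} (hz : 0 < z.re) : ‖Gamma z‖ ≤ Real.Gamma z.re := by
  rw [Gamma_eq_integral hz, GammaIntegral, Real.Gamma_eq_integral hz]
  refine (norm_integral_le_integral_norm _).trans_eq
    (setIntegral_congr_fun measurableSet_Ioi fun x hx => ?_)
  rw [norm_mul, norm_cpow_eq_rpow_re_of_pos hx, norm_real,
    Real.norm_of_nonneg (Real.exp_pos _).le, sub_re, one_re]

theorem norm_Gamma_le_one_of_re_mem_Icc {z : ℂ} (hz : z.re ∈ Icc 1 2) : ‖Gamma z‖ ≤ 1 := by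
  have hΓ := Real.convexOn_Gamma.le_max_of_mem_Icc (by norm_num) (by norm_num) hz
  rw [Real.Gamma_one, Real.Gamma_two, max_self] at hΓ
  exact (norm_Gamma_le_Gamma_re (by linarith [hz.1])).trans hΓ

theorem differentiableOn_Gamma_re_pos : DifferentiableOn ℂ Gamma {z | 0 < z.re} := by
  refine fun z hz => (differentiableAt_Gamma z fun m hm => ?_).differentiableWithinAt
  simp only [hm, mem_ofPred_eq, neg_re, natCast_re, Left.neg_pos_iff] at hz
  exact (Nat.cast_nonneg m).not_gt hz

end Complex

theorem exists_differentiable_eqOn_of_eqOn_succ {𝕜 X E : Type*} [NontriviallyNormedField 𝕜]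
    [NormedAddCommGroup X] [NormedSpace 𝕜 X] [NormedAddCommGroup E] [NormedSpace 𝕜 E]
    {U : ℕ → Set X} (hUo : ∀ n, IsOpen (U n)) (hU : Monotone U) (hcover : ∀ x, ∃ n, x ∈ U n)
    {g : ℕ → X → E} (hg : ∀ n, DifferentiableOn 𝕜 (g n) (U n))
    (hsucc : ∀ n, EqOn (g (n + 1)) (g n) (U n)) :
    ∃ D : X → E, Differentiable 𝕜 D ∧ ∀ n, EqOn D (g n) (U n) := by
  classical
  have hle : ∀ m n, m ≤ n → EqOn (g n) (g m) (U m) := by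
    intro m n hmn
    induction n, hmn using Nat.le_induction with
    | base => exact eqOn_refl _ _
    | succ n hmn ih => exact fun x hx => (hsucc n (hU hmn hx)).trans (ih hx)
  have hD : ∀ n, EqOn (fun x => g (Nat.find (hcover x)) x) (g n) (U n) := fun n x hx =>
    (hle _ n (Nat.find_min' _ hx) (Nat.find_spec (hcover x))).symm
  refine ⟨_, fun x => ?_, hD⟩
  obtain ⟨n, hn⟩ := hcover x
  have hU_nhds := (hUo n).mem_nhds hn
  exact ((hg n).differentiableAt hU_nhds).congr_of_eventuallyEq
    (eventuallyEq_of_mem hU_nhds (hD n))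

/-- When `g 1 = 0`, this is `z ↦ g (z + 1) / z`, continued across `z = 0`. -/
noncomputable def extendLeft (g : ℂ → ℂ) : ℂ → ℂ := dslope (fun w => g (w + 1)) 0

section extendLeft

variable {g : ℂ → ℂ} {a : ℝ}

theorem mul_extendLeft (h1 : g 1 = 0) (z : ℂ) : z * extendLeft g z = g (z + 1) := by
  simpa [extendLeft, h1] using sub_smul_dslope (fun w => g (w + 1)) 0 z

theorem differentiableOn_extendLeft (ha : a < 1) (hg : DifferentiableOn ℂ g {z | a < z.re}) :
    DifferentiableOn ℂ (extendLeft g) {z | a - 1 < z.re} := by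
  have hopen : IsOpen {z : ℂ | a - 1 < z.re} := isOpen_lt continuous_const continuous_re
  refine (differentiableOn_dslope (hopen.mem_nhds ?_)).2 ?_
  · simp only [mem_ofPred_eq, zero_re]
    linarith
  · exact hg.comp (differentiableOn_id.add_const 1) fun z hz => by
      simp only [mem_ofPred_eq, add_re, one_re] at hz ⊢
      linarith

theorem eqOn_extendLeft (hg : DifferentiableOn ℂ g {z | a < z.re})
    (hrec : ∀ z, a < z.re → g (z + 1) = z * g z) (h1 : g 1 = 0) :
    EqOn (extendLeft g) g {z | a < z.re} := by
  intro z hz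
  rcases eq_or_ne z 0 with rfl | hz0
  · have hnhds : {z : ℂ | a < z.re} ∈ 𝓝 0 :=
      (isOpen_lt continuous_const continuous_re).mem_nhds hz
    have hshift : (fun w => g (w + 1)) =ᶠ[𝓝 0] fun w => w * g w := eventually_of_mem hnhds hrec
    rw [extendLeft, dslope_same, hshift.deriv_eq,
      deriv_fun_mul differentiableAt_fun_id (hg.differentiableAt hnhds)]
    simp
  · exact mul_left_cancel₀ hz0 ((mul_extendLeft h1 z).trans (hrec z hz))

theorem extendLeft_add_one (hg : DifferentiableOn ℂ g {z | a < z.re})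
    (hrec : ∀ z, a < z.re → g (z + 1) = z * g z) (h1 : g 1 = 0) {z : ℂ} (hz : a - 1 < z.re) :
    extendLeft g (z + 1) = z * extendLeft g z := by
  have hz1 : a < (z + 1).re := by
    simp only [add_re, one_re]
    linarith
  rw [mul_extendLeft h1, eqOn_extendLeft hg hrec h1 hz1]

end extendLeft

theorem exists_differentiable_eqOn_of_add_one_eq_mul {g : ℂ → ℂ}
    (hg : DifferentiableOn ℂ g {z | 0 < z.re}) (hrec : ∀ z, 0 < z.re → g (z + 1) = z * g z)
    (h1 : g 1 = 0) :
    ∃ D : ℂ → ℂ, Differentiable ℂ D ∧ (∀ z, D (z + 1) = z * D z) ∧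
      EqOn D g {z | 0 < z.re} := by
  set G : ℕ → ℂ → ℂ := fun n => extendLeft^[n] g
  have hG : ∀ n : ℕ, DifferentiableOn ℂ (G n) {z | -(n : ℝ) < z.re} ∧
      (∀ z, -(n : ℝ) < z.re → G n (z + 1) = z * G n z) ∧ G n 1 = 0 := by
    intro n
    induction n with
    | zero => simpa [G] using ⟨hg, hrec, h1⟩
    | succ n ih =>
      obtain ⟨hd, hr, h1⟩ := ih
      have hn : -(n : ℝ) < 1 := by linarith [(Nat.cast_nonneg n : (0 : ℝ) ≤ n)]
      simp only [G, Function.iterate_succ_apply', Nat.cast_succ, neg_add']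
      exact ⟨differentiableOn_extendLeft hn hd, fun z hz => extendLeft_add_one hd hr h1 hz,
        (eqOn_extendLeft hd hr h1 (by simpa using hn)).trans h1⟩
  have hsucc : ∀ n : ℕ, EqOn (G (n + 1)) (G n) {z | -(n : ℝ) < z.re} := fun n => by
    simp only [G, Function.iterate_succ_apply']
    exact eqOn_extendLeft (hG n).1 (hG n).2.1 (hG n).2.2
  obtain ⟨D, hD, hDG⟩ := exists_differentiable_eqOn_of_eqOn_succ
    (fun n => isOpen_lt continuous_const continuous_re)
    (fun m n hmn z hz => by
      simp only [mem_ofPred_eq] at hz ⊢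
      linarith [(Nat.cast_le.2 hmn : (m : ℝ) ≤ n)])
    (fun z => (exists_nat_gt (-z.re)).imp fun n hn => by simp only [mem_ofPred_eq]; linarith)
    (fun n => (hG n).1) hsucc
  refine ⟨D, hD, fun z => ?_, by simpa [G] using hDG 0⟩
  obtain ⟨n, hn⟩ := exists_nat_gt (-z.re)
  have hz1 : -(n : ℝ) < (z + 1).re := by
    simp only [add_re, one_re]
    linarith
  rw [hDG n hz1, hDG n (show -(n : ℝ) < z.re by linarith)]
  exact (hG n).2.1 z (by linarith)

theorem Function.Periodic.le_of_le_on_strip {β : Type*} [Preorder β] {u : ℂ → β} {C : β}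
    (hu : Function.Periodic u 1) (hC : ∀ z : ℂ, 1 ≤ z.re → z.re ≤ 2 → u z ≤ C) (z : ℂ) :
    u z ≤ C := by
  rw [← hu.sub_int_mul_eq (x := z) (⌊z.re⌋ - 1)]
  apply hC <;> simp only [Int.cast_sub, Int.cast_one, mul_one, sub_re, intCast_re, one_re] <;>
    linarith [Int.floor_le z.re, Int.lt_floor_add_one z.re]

theorem Continuous.exists_bound_on_strip_of_one_le_abs_im {E : Type*} [NormedAddCommGroup E]
    {F : ℂ → E} {C : ℝ} (hF : Continuous F)
    (hC : ∀ z : ℂ, 1 ≤ z.re → z.re ≤ 2 → 1 ≤ |z.im| → ‖F z‖ ≤ C) :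
    ∃ M, ∀ z : ℂ, 1 ≤ z.re → z.re ≤ 2 → ‖F z‖ ≤ M := by
  have hK : IsCompact (Icc 1 2 ×ℂ Icc (-1) 1) := isCompact_Icc.reProdIm isCompact_Icc
  obtain ⟨M, hM⟩ := hK.exists_bound_of_continuousOn hF.continuousOn
  refine ⟨max M C, fun z h1 h2 => ?_⟩
  rcases le_or_gt 1 |z.im| with him | him
  · exact (hC z h1 h2 him).trans (le_max_right _ _)
  · exact (hM z ⟨⟨h1, h2⟩, abs_le.1 him.le⟩).trans (le_max_left _ _)

section AddOneEqMul

variable {D : ℂ → ℂ} {C : ℝ}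

theorem norm_le_of_add_one_eq_mul (hrec : ∀ z, D (z + 1) = z * D z)
    (hC : ∀ z : ℂ, 1 ≤ z.re → z.re ≤ 2 → ‖D z‖ ≤ C) {w : ℂ} (h1 : -1 ≤ w.re) (h2 : w.re ≤ 0)
    (him : 1 ≤ |w.im|) : ‖D w‖ ≤ C := by
  have hw : 1 ≤ ‖w‖ := him.trans (abs_im_le_norm w)
  have hw1 : 1 ≤ ‖w + 1‖ := him.trans <| by simpa using abs_im_le_norm (w + 1)
  have hD2 : D (w + 2) = (w + 1) * (w * D w) := by
    rw [show w + 2 = w + 1 + 1 by ring, hrec, hrec]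
  calc ‖D w‖ ≤ ‖w + 1‖ * (‖w‖ * ‖D w‖) :=
        (le_mul_of_one_le_left (norm_nonneg _) hw).trans
          (le_mul_of_one_le_left (by positivity) hw1)
    _ = ‖D (w + 2)‖ := by rw [hD2, norm_mul, norm_mul]
    _ ≤ C := hC _ (by simp only [add_re, re_ofNat]; linarith)
          (by simp only [add_re, re_ofNat]; linarith)

theorem mul_apply_one_sub_eq_zero (hD : Differentiable ℂ D) (hrec : ∀ z, D (z + 1) = z * D z)
    (hC : ∀ z : ℂ, 1 ≤ z.re → z.re ≤ 2 → ‖D z‖ ≤ C) (h1 : D 1 = 0) (z : ℂ) :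
    D z * D (1 - z) = 0 := by
  set V : ℂ → ℂ := fun z => D z * D (1 - z)
  have hV : Differentiable ℂ V :=
    hD.mul (hD.comp ((differentiable_const 1).sub differentiable_id))
  have hanti : Function.Antiperiodic V 1 := fun z => by
    simp only [V]
    rw [show 1 - (z + 1) = -z by ring, hrec, show 1 - z = -z + 1 by ring, hrec]
    ring
  have hC0 : 0 ≤ C := (norm_nonneg _).trans (hC 1 (by simp) (by norm_num))
  obtain ⟨M, hM⟩ := hV.continuous.exists_bound_on_strip_of_one_le_abs_im (C := C * C)
    fun z h1 h2 him => by
      rw [norm_mul]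
      refine mul_le_mul (hC z h1 h2) (norm_le_of_add_one_eq_mul hrec hC ?_ ?_ ?_)
        (norm_nonneg _) hC0
      · simp only [sub_re, one_re]; linarith
      · simp only [sub_re, one_re]; linarith
      · simpa using him
  have hperiodic : Function.Periodic (fun z => ‖V z‖) 1 := fun z => by simp [hanti z]
  have hbdd : Bornology.IsBounded (range V) :=
    isBounded_iff_forall_norm_le.2 ⟨M, forall_mem_range.2 (hperiodic.le_of_le_on_strip hM)⟩
  simpa [V, h1] using hV.apply_eq_apply_of_bounded hbdd z 1

theorem eq_zero_of_add_one_eq_mul (hD : Differentiable ℂ D) (hrec : ∀ z, D (z + 1) = z * D z)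
    (hC : ∀ z : ℂ, 1 ≤ z.re → z.re ≤ 2 → ‖D z‖ ≤ C) (h1 : D 1 = 0) : D = 0 := by
  have hrefl : Differentiable ℂ fun z => D (1 - z) :=
    hD.comp ((differentiable_const 1).sub differentiable_id)
  rcases AnalyticOnNhd.eq_zero_or_eq_zero_of_mul_eq_zero (fun z _ => hD.analyticAt z)
    (fun z _ => hrefl.analyticAt z) (fun z _ => mul_apply_one_sub_eq_zero hD hrec hC h1 z)
    isPreconnected_univ with h | h
  · exact funext fun z => h z (mem_univ z)
  · exact funext fun z => by simpa using h (1 - z) (mem_univ _)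

end AddOneEqMul

theorem wielandt (f : ℂ → ℂ) (hd : DifferentiableOn ℂ f {z | 0 < z.re})
    (hb : ∃ C : ℝ, ∀ z : ℂ, 1 ≤ z.re → z.re ≤ 2 → ‖f z‖ ≤ C)
    (hrec : ∀ z : ℂ, 0 < z.re → f (z + 1) = z * f z) (h1 : f 1 = 1) :
    ∀ z : ℂ, 0 < z.re → f z = Complex.Gamma z := by
  obtain ⟨C, hC⟩ := hb
  obtain ⟨D, hD, hDrec, hDf⟩ := exists_differentiable_eqOn_of_add_one_eq_mul
    (g := fun z => f z - Gamma z) (hd.sub differentiableOn_Gamma_re_pos)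
    (fun z hz => by rw [hrec z hz, Gamma_add_one z (ne_zero_of_re_pos hz)]; ring)
    (by simp [h1])
  have hDC : ∀ z : ℂ, 1 ≤ z.re → z.re ≤ 2 → ‖D z‖ ≤ C + 1 := fun z h1 h2 => by
    rw [hDf (show 0 < z.re by linarith)]
    exact (norm_sub_le _ _).trans
      (add_le_add (hC z h1 h2) (norm_Gamma_le_one_of_re_mem_Icc ⟨h1, h2⟩))
  have hD1 : D 1 = 0 := by simpa [h1] using hDf (show 0 < (1 : ℂ).re by simp)
  have hD0 := eq_zero_of_add_one_eq_mul hD hDrec hDC hD1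
  intro z hz
  simpa [hD0, sub_eq_zero, eq_comm] using hDf hz
end

section
/- If f : (0,∞) → (0,∞) satisfies f(x+1) = x f(x) for all x > 0, f(1) = 1, and lim_{n→∞} f(x+n) / ((n-1)! · n^x) = 1 for every x > 0, then f = Γ on (0,∞). -/
/-!
Iterating the recurrence gives `f (x + n) = f x * x (x + 1) ⋯ (x + n - 1)`, so the normalised
quotient in the hypothesis, multiplied by Euler's sequence `Real.GammaSeq x n → Γ x`, equals
`f x * n / (n + x)`. The left side tends to `Γ x` and the right side to `f x`.
-/

open Filter Finset

lemma apply_add_nat_eq_mul_prod {f : ℝ → ℝ} (hrec : ∀ x > 0, f (x + 1) = x * f x)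
    {x : ℝ} (hx : 0 < x) (n : ℕ) : f (x + n) = f x * ∏ i ∈ range n, (x + i) := by
  induction n with
  | zero => simp
  | succ n ih =>
    have hstep : f (x + (n + 1 : ℕ)) = (x + n) * f (x + n) := by
      rw [← hrec (x + n) (by positivity)]
      push_cast
      ring_nf
    rw [hstep, ih, prod_range_succ]
    ring

lemma prod_div_factorial_mul_GammaSeq {x : ℝ} (hx : 0 < x) {n : ℕ} (hn : n ≠ 0) :
    (∏ i ∈ range n, (x + i)) / ((n - 1).factorial * (n : ℝ) ^ x) * Real.GammaSeq x n
      = n / (n + x) := by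
  have hn0 : (0 : ℝ) < n := by positivity
  have hprod : (0 : ℝ) < ∏ i ∈ range n, (x + i) := prod_pos fun i _ => by positivity
  have hfac : (n.factorial : ℝ) = n * (n - 1).factorial := by
    rw [← Nat.mul_factorial_pred hn]
    push_cast
    ring
  have hpow : (0 : ℝ) < (n : ℝ) ^ x := Real.rpow_pos_of_pos hn0 x
  rw [Real.GammaSeq, prod_range_succ, hfac]
  field_simp
  ring

theorem weierstrass_uniqueness_general (f : ℝ → ℝ)
    (hrec : ∀ x > 0, f (x + 1) = x * f x)
    (hlim : ∀ x > 0, Tendsto (fun n : ℕ => f (x + n) / ((Nat.factorial (n - 1) : ℝ) * (n : ℝ) ^ x))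
      atTop (nhds 1)) :
    ∀ x > 0, f x = Real.Gamma x := by
  intro x hx
  have h_to_Gamma : Tendsto (fun n : ℕ => f x * (n / (n + x))) atTop (nhds (Real.Gamma x)) := by
    have hmul := (hlim x hx).mul (Real.GammaSeq_tendsto_Gamma x)
    rw [one_mul] at hmul
    refine hmul.congr' ?_
    filter_upwards [eventually_ne_atTop 0] with n hn
    rw [apply_add_nat_eq_mul_prod hrec hx, mul_div_assoc, mul_assoc,
      prod_div_factorial_mul_GammaSeq hx hn]
  have h_to_f : Tendsto (fun n : ℕ => f x * (n / (n + x))) atTop (nhds (f x)) := by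
    simpa using (tendsto_natCast_div_add_atTop x).const_mul (f x)
  exact tendsto_nhds_unique h_to_f h_to_Gamma

theorem weierstrass_uniqueness (f : ℝ → ℝ) (hpos : ∀ x > 0, 0 < f x) (h1 : f 1 = 1)
    (hrec : ∀ x > 0, f (x + 1) = x * f x)
    (hlim : ∀ x > 0, Tendsto (fun n : ℕ => f (x + n) / ((Nat.factorial (n - 1) : ℝ) * (n : ℝ) ^ x))
      atTop (nhds 1)) :
    ∀ x > 0, f x = Real.Gamma x :=
  weierstrass_uniqueness_general f hrec hlim
end

section
/- The Prym function e·P(s) (with P(s) = ∑_{n=0}^∞ (−1)^n/(n!(s+n))) satisfies e·P(s) = 1/s + 1/(s(s+1)) + 1/(s(s+1)(s+2)) + ⋯ = ∑_{k=0}^∞ 1/(s(s+1)⋯(s+k)) for Re s > 0. -/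
/-- The Prym function. -/
noncomputable def prym (s : ℂ) : ℂ := ∑' n : ℕ, (-1) ^ n / ((Nat.factorial n : ℂ) * (s + n))

/-!
Both `e = ∑ 1/n!` and the series of `P(s)` converge absolutely for `Re s > 0`, so their Cauchy
product may be taken. Its `n`-th coefficient is `(1/n!) ∑_{k ≤ n} (-1)^k C(n,k) / (s+k)`, and this
alternating binomial sum is `n! / (s(s+1)⋯(s+n))`, the partial-fraction expansion of
`1 / (s(s+1)⋯(s+n))`; it follows by induction on `n` from Pascal's rule, which turns the sum
at `n + 1` into the difference of the sums at `s` and `s + 1`.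
-/

open Finset Nat

section AlternatingBinomialSum

variable {K : Type*} [Field K]

theorem sum_range_succ_alternating_choose_div_add (s : K) (n : ℕ) :
    ∑ k ∈ range (n + 2), (-1) ^ k * ((n + 1).choose k : K) / (s + k) =
      ∑ k ∈ range (n + 1), (-1) ^ k * (n.choose k : K) / (s + k) -
        ∑ k ∈ range (n + 1), (-1) ^ k * (n.choose k : K) / (s + 1 + k) := by
  have extend : ∑ k ∈ range (n + 1), (-1) ^ k * (n.choose k : K) / (s + k) =
      ∑ k ∈ range (n + 2), (-1) ^ k * (n.choose k : K) / (s + k) := by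
    simp [sum_range_succ _ (n + 1)]
  rw [extend, sum_range_succ' _ (n + 1), sum_range_succ' _ (n + 1), add_sub_right_comm,
    ← sum_sub_distrib]
  congr 1
  · refine sum_congr rfl fun k _ => ?_
    rw [choose_succ_succ]
    push_cast
    ring
  · simp

theorem prod_range_inv_add_sub_prod_range_inv_add_one {s : K} (n : ℕ) (h₀ : s ≠ 0)
    (hn : s + 1 + n ≠ 0) :
    ∏ j ∈ range (n + 1), (s + j)⁻¹ - ∏ j ∈ range (n + 1), (s + 1 + j)⁻¹ =
      (n + 1) * ∏ j ∈ range (n + 2), (s + j)⁻¹ := by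
  have shift : ∀ m, ∏ j ∈ range (m + 1), (s + j)⁻¹ = s⁻¹ * ∏ j ∈ range m, (s + 1 + j)⁻¹ := by
    intro m
    rw [prod_range_succ', mul_comm]
    push_cast
    simp only [add_zero, add_assoc, add_comm (1 : K)]
  rw [shift, shift, prod_range_succ _ n]
  field_simp
  ring

theorem sum_range_alternating_choose_div_add {s : K} (hs : ∀ j : ℕ, s + j ≠ 0) (n : ℕ) :
    ∑ k ∈ range (n + 1), (-1) ^ k * (n.choose k : K) / (s + k) =
      n ! * ∏ j ∈ range (n + 1), (s + j)⁻¹ := by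
  induction n generalizing s with
  | zero => simp
  | succ n ih =>
    have hs₁ : ∀ j : ℕ, s + 1 + j ≠ 0 := fun j => by
      simpa [add_assoc, add_comm (1 : K)] using hs (j + 1)
    rw [sum_range_succ_alternating_choose_div_add, ih hs, ih hs₁, ← mul_sub,
      prod_range_inv_add_sub_prod_range_inv_add_one n (by simpa using hs 0) (hs₁ n),
      factorial_succ]
    push_cast
    ring

theorem sum_range_alternating_div_factorial_mul_inv_factorial [CharZero K] (s : K) (n : ℕ) :
    ∑ k ∈ range (n + 1), (-1) ^ k / (k ! * (s + k)) * ((n - k)! : K)⁻¹ =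
      (n ! : K)⁻¹ * ∑ k ∈ range (n + 1), (-1) ^ k * (n.choose k : K) / (s + k) := by
  rw [mul_sum]
  refine sum_congr rfl fun k hk => ?_
  rw [cast_choose K (mem_range_succ_iff.mp hk)]
  field_simp
  rw [div_mul_cancel_right₀ (cast_ne_zero.mpr (factorial_ne_zero n)), one_div]

end AlternatingBinomialSum

theorem Complex.re_le_norm_add_natCast (s : ℂ) (n : ℕ) : s.re ≤ ‖s + n‖ :=
  calc s.re ≤ (s + n).re := by simp
    _ ≤ ‖s + n‖ := re_le_norm _

theorem Complex.summable_norm_inv_factorial : Summable fun n : ℕ => ‖(n ! : ℂ)⁻¹‖ := by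
  simpa [one_div] using Real.summable_pow_div_factorial 1

theorem Complex.ofReal_exp_one_eq_tsum : (Real.exp 1 : ℂ) = ∑' n : ℕ, (n ! : ℂ)⁻¹ := by
  simpa [Complex.exp_eq_exp_ℂ] using (NormedSpace.expSeries_div_hasSum_exp (1 : ℂ)).tsum_eq.symm

theorem summable_norm_prym_term {s : ℂ} (hs : 0 < s.re) :
    Summable fun n : ℕ => ‖(-1) ^ n / ((n ! : ℂ) * (s + n))‖ := by
  refine Complex.summable_norm_inv_factorial.mul_left s.re⁻¹ |>.of_nonneg_of_le
    (fun _ => norm_nonneg _) fun n => ?_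
  simp only [norm_div, norm_mul, norm_pow, norm_neg, norm_one, one_pow, norm_inv,
    Complex.norm_natCast]
  rw [one_div, mul_inv, mul_comm]
  gcongr
  exact Complex.re_le_norm_add_natCast s n

theorem e_mul_prym_eq_series (s : ℂ) (hs : 0 < s.re) :
    (Real.exp 1 : ℂ) * prym s = ∑' k : ℕ, ∏ j ∈ Finset.range (k + 1), (s + j)⁻¹ := by
  have hs₀ (j : ℕ) : s + j ≠ 0 :=
    norm_pos_iff.mp (hs.trans_le (Complex.re_le_norm_add_natCast s j))
  rw [mul_comm, prym, Complex.ofReal_exp_one_eq_tsum,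
    tsum_mul_tsum_eq_tsum_sum_range_of_summable_norm (summable_norm_prym_term hs)
      Complex.summable_norm_inv_factorial]
  refine tsum_congr fun n => ?_
  rw [sum_range_alternating_div_factorial_mul_inv_factorial,
    sum_range_alternating_choose_div_add hs₀,
    inv_mul_cancel_left₀ (cast_ne_zero.mpr (factorial_ne_zero n))]
end

section
/- The Davis pseudo-Gamma function Γ_S (as defined by Γ_S(s)=1/s on (0,1], Γ_S=1 on [1,2], and Γ_S(s)=∏_{j=1}^{k−1}(s−j) on [k,k+1] for k ≥ 2) is continuous and convex on (0,∞) but is not equal to Γ; in particular it is not log-convex. -/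
/-!
On `[k + 1, k + 3]` Davis's function is the maximum of the two polynomials
`davisPiece k s = (s - 1) ⋯ (s - k)` and `davisPiece (k + 1)`, and on `(0, 2]` it is `max s⁻¹ 1`.
Each `davisPiece k` is convex on `[k, ∞)`, being a product of nonnegative, monotone, convex
factors. Consecutive intervals overlap, so these local convexity statements glue to convexity on
`(0, ∞)`, which also gives continuity. Since `Γ_S 1 = 1` and `Γ_S (s + 1) = s Γ_S s`, the
Bohr–Mollerup theorem would force `Γ_S = Γ` if `Γ_S` were log-convex; but
`Γ_S (1/2) = 2 ≠ √π = Γ (1/2)`.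
-/

/-- Davis's pseudo-Gamma function. -/
noncomputable def davisGamma (s : ℝ) : ℝ :=
  if s ≤ 1 then 1 / s else ∏ j ∈ Finset.range (⌊s⌋₊ - 1), (s - (j + 1))

open Set

theorem slope_mem_Icc_of_slope_le_slope {f : ℝ → ℝ} {p q r : ℝ} (hpq : p < q) (hqr : q < r)
    (h : slope f p q ≤ slope f q r) : slope f p r ∈ Icc (slope f p q) (slope f q r) := by
  have h₀ : 0 < (r - q) / (r - p) := div_pos (by linarith) (by linarith)
  have h₁ : (r - q) / (r - p) < 1 := (div_lt_one (by linarith)).2 (by linarith)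
  rw [← lineMap_slope_slope_sub_div_sub f p q r (by linarith)]
  exact ⟨(left_le_lineMap_iff_le h₀).2 h, (lineMap_le_right_iff_le h₁).2 h⟩

theorem ConvexOn.of_inter_Iic_of_inter_Ici {s : Set ℝ} {f : ℝ → ℝ} {b c : ℝ} (hs : Convex ℝ s)
    (hbc : b < c) (hle : ConvexOn ℝ (s ∩ Iic c) f) (hge : ConvexOn ℝ (s ∩ Ici b) f) :
    ConvexOn ℝ s f := by
  have adj : ∀ {t : Set ℝ} {x y z : ℝ}, ConvexOn ℝ t f → x ∈ t → z ∈ t → x < y → y < z →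
      slope f x y ≤ slope f y z := fun hf hx hz hxy hyz => by
    simpa only [slope_def_field] using hf.slope_mono_adjacent hx hz hxy hyz
  refine convexOn_of_slope_mono_adjacent hs fun {x y z} hx hz hxy hyz => ?_
  simp only [← slope_def_field]
  have mem : ∀ {t}, x ≤ t → t ≤ z → t ∈ s := fun h₁ h₂ => hs.ordConnected.out hx hz ⟨h₁, h₂⟩
  have mem_le : ∀ {t}, t ∈ s → t ≤ c → t ∈ s ∩ Iic c := fun h₁ h₂ => ⟨h₁, h₂⟩
  have mem_ge : ∀ {t}, t ∈ s → b ≤ t → t ∈ s ∩ Ici b := fun h₁ h₂ => ⟨h₁, h₂⟩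
  rcases le_or_gt z c with hzc | hcz
  · exact adj hle (mem_le hx (by linarith)) (mem_le hz hzc) hxy hyz
  rcases le_or_gt b x with hbx | hxb
  · exact adj hge (mem_ge hx hbx) (mem_ge hz (by linarith)) hxy hyz
  have hcs : c ∈ s := mem (by linarith) hcz.le
  have hbs : b ∈ s := mem hxb.le (by linarith)
  rcases lt_or_ge y c with hyc | hcy
  · -- pass from `[y, c]` to `[c, z]` through a point of `[b, c)` to the right of `y`
    set p := max y b
    have hpc : p < c := max_lt hyc hbc
    have hps : p ∈ s := mem (hxy.le.trans (le_max_left y b)) (by linarith)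
    have hyc_pc : slope f y c ≤ slope f p c := by
      rw [slope_comm f y, slope_comm f p]
      exact hle.monotoneOn_slope_lt (mem_le hcs le_rfl) ⟨mem_le (mem hxy.le hyz.le) hyc.le, hyc⟩
        ⟨mem_le hps hpc.le, hpc⟩ (le_max_left y b)
    have hpc_cz : slope f p c ≤ slope f c z :=
      adj hge (mem_ge hps (le_max_right y b)) (mem_ge hz (by linarith)) hpc hcz
    exact (adj hle (mem_le hx (by linarith)) (mem_le hcs le_rfl) hxy hyc).trans
      (slope_mem_Icc_of_slope_le_slope hyc hcz (hyc_pc.trans hpc_cz)).1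
  · have hxb_bc : slope f x b ≤ slope f b c :=
      adj hle (mem_le hx (by linarith)) (mem_le hcs le_rfl) hxb hbc
    have hbc_by : slope f b c ≤ slope f b y :=
      hge.monotoneOn_slope_gt (mem_ge hbs le_rfl) ⟨mem_ge hcs hbc.le, hbc⟩
        ⟨mem_ge (mem hxy.le hyz.le) (by linarith), by linarith⟩ hcy
    exact (slope_mem_Icc_of_slope_le_slope hxb (by linarith) (hxb_bc.trans hbc_by)).2.trans
      (adj hge (mem_ge hbs le_rfl) (mem_ge hz (by linarith)) (by linarith) hyz)

noncomputable def davisPiece (k : ℕ) (s : ℝ) : ℝ := ∏ j ∈ Finset.range k, (s - (j + 1))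

theorem davisPiece_succ (k : ℕ) (s : ℝ) : davisPiece (k + 1) s = davisPiece k s * (s - (k + 1)) :=
  Finset.prod_range_succ _ k

theorem davisPiece_succ_add_one (k : ℕ) (s : ℝ) :
    davisPiece (k + 1) (s + 1) = s * davisPiece k s := by
  rw [davisPiece, Finset.prod_range_succ', davisPiece, mul_comm]
  push_cast
  congr 1
  · ring
  · exact Finset.prod_congr rfl fun j _ => by ring

theorem davisPiece_pos {k : ℕ} {s : ℝ} (h : (k : ℝ) < s) : 0 < davisPiece k s :=
  Finset.prod_pos fun j hj => by
    have : (j : ℝ) + 1 ≤ k := by exact_mod_cast Finset.mem_range.1 hj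
    linarith

theorem davisPiece_monotoneOn (k : ℕ) : MonotoneOn (davisPiece k) (Ici (k : ℝ)) :=
  fun a ha b _ hab => Finset.prod_le_prod (fun j hj => by
    have : (j : ℝ) + 1 ≤ k := by exact_mod_cast Finset.mem_range.1 hj
    linarith [mem_Ici.1 ha]) fun j _ => by linarith

theorem davisPiece_convexOn (k : ℕ) : ConvexOn ℝ (Ici (k : ℝ)) (davisPiece k) := by
  induction k with
  | zero => exact (convexOn_const 1 (convex_Ici _)).congr fun s _ => by simp [davisPiece]
  | succ k ih =>
    have hsub : Ici ((k + 1 : ℕ) : ℝ) ⊆ Ici (k : ℝ) := Ici_subset_Ici.2 (by simp)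
    have hlin : ConvexOn ℝ (Ici ((k + 1 : ℕ) : ℝ)) fun s => s - (k + 1) :=
      ((convexOn_id (convex_Ici _)).add_const _).congr fun s _ => (sub_eq_add_neg s _).symm
    have hlin_mono : MonotoneOn (fun s : ℝ => s - (k + 1)) (Ici ((k + 1 : ℕ) : ℝ)) :=
      fun a _ b _ hab => by linarith
    refine (ConvexOn.mul (ih.subset hsub (convex_Ici _)) hlin
      (fun s hs => (davisPiece_pos (lt_of_lt_of_le (by simp) hs)).le) (fun s hs => ?_)
      (((davisPiece_monotoneOn k).mono hsub).monovaryOn hlin_mono)).congr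
      fun s _ => (davisPiece_succ k s).symm
    simp only [mem_Ici, Nat.cast_add, Nat.cast_one] at hs
    linarith

theorem davisGamma_of_le_one {s : ℝ} (h : s ≤ 1) : davisGamma s = s⁻¹ := by
  rw [davisGamma, if_pos h, one_div]

theorem davisGamma_eq_davisPiece {k : ℕ} {s : ℝ} (h₁ : (k : ℝ) + 1 ≤ s) (h₂ : s ≤ k + 2) :
    davisGamma s = davisPiece k s := by
  by_cases hs : s ≤ 1
  · obtain rfl : k = 0 := Nat.le_zero.1 (by exact_mod_cast (by linarith : (k : ℝ) ≤ 0))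
    obtain rfl : s = 1 := hs.antisymm (by simpa using h₁)
    simp [davisGamma, davisPiece]
  rw [davisGamma, if_neg hs]
  rcases h₂.lt_or_eq with h₂ | rfl
  · have hfloor : ⌊s⌋₊ = k + 1 :=
      (Nat.floor_eq_iff (by linarith)).2 ⟨by push_cast; linarith, by push_cast; linarith⟩
    rw [hfloor]
    rfl
  · rw [show (k : ℝ) + 2 = ((k + 2 : ℕ) : ℝ) by push_cast; rfl, Nat.floor_natCast]
    change davisPiece (k + 1) _ = _
    rw [davisPiece_succ]
    push_cast
    ring

theorem exists_nat_add_one_le_and_le_add_two {s : ℝ} (h : 1 ≤ s) :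
    ∃ k : ℕ, (k : ℝ) + 1 ≤ s ∧ s ≤ k + 2 :=
  ⟨⌊s - 1⌋₊, by linarith [Nat.floor_le (sub_nonneg.2 h)],
    by linarith [Nat.lt_floor_add_one (s - 1)]⟩

theorem davisGamma_one : davisGamma 1 = 1 := by simp [davisGamma]

theorem davisGamma_pos {s : ℝ} (hs : 0 < s) : 0 < davisGamma s := by
  rcases le_or_gt s 1 with h | h
  · rw [davisGamma_of_le_one h]
    exact inv_pos.2 hs
  · obtain ⟨k, hk₁, hk₂⟩ := exists_nat_add_one_le_and_le_add_two h.le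
    rw [davisGamma_eq_davisPiece hk₁ hk₂]
    exact davisPiece_pos (by linarith)

theorem davisGamma_add_one {s : ℝ} (hs : 0 < s) : davisGamma (s + 1) = s * davisGamma s := by
  rcases le_or_gt s 1 with h | h
  · rw [davisGamma_eq_davisPiece (k := 0) (by simpa using hs.le) (by norm_num; linarith),
      davisGamma_of_le_one h, mul_inv_cancel₀ hs.ne']
    simp [davisPiece]
  · obtain ⟨k, hk₁, hk₂⟩ := exists_nat_add_one_le_and_le_add_two h.le
    rw [davisGamma_eq_davisPiece (k := k + 1) (by push_cast; linarith) (by push_cast; linarith),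
      davisPiece_succ_add_one, davisGamma_eq_davisPiece hk₁ hk₂]

theorem davisGamma_convexOn_Ioc_two : ConvexOn ℝ (Ioc 0 2) davisGamma := by
  refine (((convexOn_zpow (-1)).subset Ioc_subset_Ioi_self (convex_Ioc 0 2)).sup
    (convexOn_const 1 (convex_Ioc 0 2))).congr fun s ⟨hs₀, hs₂⟩ => ?_
  simp only [Pi.sup_apply, zpow_neg_one]
  rcases le_or_gt s 1 with h | h
  · rw [davisGamma_of_le_one h, max_eq_left ((one_le_inv₀ hs₀).2 h)]
  · rw [davisGamma_eq_davisPiece (k := 0) (by simpa using h.le) (by simpa using hs₂),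
      max_eq_right (inv_le_one_of_one_le₀ h.le)]
    simp [davisPiece]

theorem davisGamma_convexOn_Icc (k : ℕ) :
    ConvexOn ℝ (Icc ((k : ℝ) + 1) (k + 3)) davisGamma := by
  have h₀ : ConvexOn ℝ (Icc ((k : ℝ) + 1) (k + 3)) (davisPiece k) :=
    (davisPiece_convexOn k).subset (fun s hs => mem_Ici.2 (by linarith [hs.1])) (convex_Icc _ _)
  have h₁ : ConvexOn ℝ (Icc ((k : ℝ) + 1) (k + 3)) (davisPiece (k + 1)) :=
    (davisPiece_convexOn (k + 1)).subset (fun s hs => mem_Ici.2 (by push_cast; linarith [hs.1]))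
      (convex_Icc _ _)
  refine (h₀.sup h₁).congr fun s ⟨hs₁, hs₃⟩ => ?_
  have hpos := (davisPiece_pos (k := k) (s := s) (by linarith)).le
  simp only [Pi.sup_apply, davisPiece_succ]
  rcases le_or_gt s (k + 2) with h | h
  · rw [davisGamma_eq_davisPiece hs₁ h, max_eq_left (mul_le_of_le_one_right hpos (by linarith))]
  · rw [davisGamma_eq_davisPiece (k := k + 1) (by push_cast; linarith) (by push_cast; linarith),
      davisPiece_succ, max_eq_right (le_mul_of_one_le_right hpos (by linarith))]

theorem davisGamma_convexOn_Ioc (n : ℕ) : ConvexOn ℝ (Ioc 0 ((n : ℝ) + 2)) davisGamma := by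
  induction n with
  | zero => simpa using davisGamma_convexOn_Ioc_two
  | succ n ih =>
    refine ConvexOn.of_inter_Iic_of_inter_Ici (convex_Ioc _ _) (b := n + 1) (c := n + 2)
      (by linarith) (ih.subset (fun s hs => ⟨hs.1.1, hs.2⟩) ((convex_Ioc _ _).inter (convex_Iic _)))
      ((davisGamma_convexOn_Icc n).subset (fun s hs => ⟨hs.2, ?_⟩)
        ((convex_Ioc _ _).inter (convex_Ici _)))
    have := hs.1.2
    push_cast at this
    linarith

theorem davisGamma_convexOn : ConvexOn ℝ (Ioi 0) davisGamma := by
  refine ⟨convex_Ioi 0, fun x hx y hy a b ha hb hab => ?_⟩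
  obtain ⟨n, hn⟩ := exists_nat_ge (max x y)
  exact (davisGamma_convexOn_Ioc n).2 ⟨hx, by linarith [le_max_left x y]⟩
    ⟨hy, by linarith [le_max_right x y]⟩ ha hb hab

theorem davisGamma_one_half_ne_Gamma : davisGamma (1 / 2) ≠ Real.Gamma (1 / 2) := by
  rw [davisGamma_of_le_one (by norm_num), Real.Gamma_one_half_eq]
  refine ne_of_gt ((Real.sqrt_lt' (by norm_num)).2 ?_)
  norm_num [Real.pi_lt_four]

theorem davisGamma_convex_not_gamma :
    ContinuousOn davisGamma (Set.Ioi 0) ∧ ConvexOn ℝ (Set.Ioi 0) davisGamma ∧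
      ¬(∀ s ∈ Set.Ioi (0 : ℝ), davisGamma s = Real.Gamma s) ∧
      ¬ConvexOn ℝ (Set.Ioi 0) (fun s => Real.log (davisGamma s)) := by
  have hne : ¬∀ s ∈ Ioi (0 : ℝ), davisGamma s = Real.Gamma s :=
    fun h => davisGamma_one_half_ne_Gamma (h _ (by norm_num))
  refine ⟨davisGamma_convexOn.continuousOn isOpen_Ioi, davisGamma_convexOn, hne,
    fun hlog => hne fun s hs => ?_⟩
  exact Real.eq_Gamma_of_log_convex hlog davisGamma_add_one davisGamma_pos davisGamma_one hs
end
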